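/- Fix an integer N ≥ 1, a row-stochastic N×N matrix Π = (π_{nn'}), parameters β ∈ (0,1), τ_C ≥ 0, γ > 0, υ ∈ (0,1), R > 0 and r_1,…,r_N > −1. Let 𝒱 be the class of functions V : (0,∞) × {1,…,N} → ℝ such that 0 < inf_{s,n} V_n(s)/s ≤ sup_{s,n} V_n(s)/s < ∞. Define the Bellman operator T̃ on 𝒱 by (T̃V)_n(s) = sup over c ∈ (0, s/(1+τ_C)) and θ ∈ [0,1] of exp((1−β)·log c + β·log ν_γ^{-1}(Σ_{n'} π_{nn'} ν_γ(V_{n'}(R_{n'}(θ)(s−(1+τ_C)c))))). Then: (i) T̃ maps 𝒱 into 𝒱; (ii) V*_n(s) = a*_n s, with a* the unique solution of the system a_n = ((1−β)/(1+τ_C))^{1−β}(β·κ_n(a))^β where κ_n(a) = ν_γ^{-1}(max_{θ∈[0,1]} Σ_{n'} π_{nn'} ν_γ(a_{n'}R_{n'}(θ))), satisfies T̃V* = V*; and (iii) V* is the unique fixed point of T̃ in 𝒱. -/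

import Mathlib

/-!
The Bellman operator `T̃` is monotone, and since the certainty equivalent
`ν_γ⁻¹ (∑ π ν_γ (·))` is positively homogeneous, `T̃` maps `μ` times the linear value function
`s ↦ a*_n s` to `μ ^ β` times it: for a linear continuation value the portfolio choice decouples
(its best certainty equivalent is `κ_n(a*)`) from the consumption choice, a Cobb–Douglas
problem solved by `c = (1 - β) s / (1 + τ_C)`, and the equation defining `a*` is exactly the
fixed-point condition. Every `V ∈ 𝒱` lies between two multiples `μ a* s` and `Λ a* s`, so `T̃ V`
lies between `μ ^ β a* s` and `Λ ^ β a* s`; this gives (i), and (ii) is the case `μ = 1`.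
A fixed point is thus squeezed between `μ ^ β ^ k a* s` and `Λ ^ β ^ k a* s` for every `k`, and
both tend to `a* s` because `β < 1`.
-/

/-- The Box–Cox transformation `ν_γ` on `(0,∞)`. -/
noncomputable def boxCox (γ c : ℝ) : ℝ :=
  if γ = 1 then Real.log c else (c ^ (1 - γ) - 1) / (1 - γ)

/-- The inverse of the Box–Cox transformation `ν_γ` (on its range). -/
noncomputable def boxCoxInv (γ y : ℝ) : ℝ :=
  if γ = 1 then Real.exp y else (1 + (1 - γ) * y) ^ (1 / (1 - γ))

open Real Set Filter Topology

lemma boxCox_le_boxCox (γ : ℝ) {x y : ℝ} (hx : 0 < x) (hxy : x ≤ y) :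
    boxCox γ x ≤ boxCox γ y := by
  unfold boxCox
  split_ifs with h
  · exact log_le_log hx hxy
  · rcases lt_or_gt_of_ne (sub_ne_zero.mpr (Ne.symm h)) with hγ | hγ
    · rw [div_le_div_right_of_neg hγ]
      linarith [rpow_le_rpow_of_nonpos hx hxy hγ.le]
    · gcongr

lemma continuousOn_boxCox (γ : ℝ) : ContinuousOn (boxCox γ) (Ioi 0) := by
  unfold boxCox
  split_ifs
  · exact continuousOn_log.mono fun x hx => ne_of_gt hx
  · exact ((continuousOn_id.rpow_const fun x hx => Or.inl (ne_of_gt hx)).sub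
      continuousOn_const).div_const _

lemma boxCoxInv_pos {γ y : ℝ} (hy : 0 < 1 + (1 - γ) * y) : 0 < boxCoxInv γ y := by
  unfold boxCoxInv
  split_ifs
  · exact exp_pos y
  · exact rpow_pos_of_pos hy _

lemma boxCoxInv_le_boxCoxInv {γ y z : ℝ} (hy : 0 < 1 + (1 - γ) * y)
    (hz : 0 < 1 + (1 - γ) * z) (hyz : y ≤ z) : boxCoxInv γ y ≤ boxCoxInv γ z := by
  unfold boxCoxInv
  split_ifs with h
  · exact exp_le_exp.mpr hyz
  · rcases lt_or_gt_of_ne (sub_ne_zero.mpr (Ne.symm h)) with hγ | hγ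
    · exact rpow_le_rpow_of_nonpos hz (by nlinarith) (one_div_neg.mpr hγ).le
    · exact rpow_le_rpow hy.le (by nlinarith) (one_div_pos.mpr hγ).le

section CertaintyEquivalent

variable {ι : Type*} [Fintype ι] {γ : ℝ} {p : ι → ℝ}

noncomputable def certEquiv (γ : ℝ) (p x : ι → ℝ) : ℝ := boxCoxInv γ (∑ i, p i * boxCox γ (x i))

lemma sum_mul_pos_of_sum_eq_one (hp : ∀ i, 0 ≤ p i) (hp1 : ∑ i, p i = 1) {x : ι → ℝ}
    (hx : ∀ i, 0 < x i) : 0 < ∑ i, p i * x i := by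
  obtain ⟨i, -, hi⟩ := Finset.exists_ne_zero_of_sum_ne_zero (hp1.trans_ne one_ne_zero)
  exact Finset.sum_pos' (fun j _ => mul_nonneg (hp j) (hx j).le)
    ⟨i, Finset.mem_univ i, mul_pos ((hp i).lt_of_ne' hi) (hx i)⟩

lemma one_add_mul_sum_boxCox (hp1 : ∑ i, p i = 1) (x : ι → ℝ) :
    1 + (1 - γ) * ∑ i, p i * boxCox γ (x i) = ∑ i, p i * x i ^ (1 - γ) := by
  by_cases h : γ = 1
  · simp [h, hp1]
  · have hγ : (1 : ℝ) - γ ≠ 0 := sub_ne_zero.mpr (Ne.symm h)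
    rw [Finset.mul_sum]
    nth_rewrite 1 [← hp1]
    rw [← Finset.sum_add_distrib]
    refine Finset.sum_congr rfl fun i _ => ?_
    simp only [boxCox, if_neg h]
    field_simp
    ring

lemma one_add_mul_sum_boxCox_pos (hp : ∀ i, 0 ≤ p i) (hp1 : ∑ i, p i = 1) {x : ι → ℝ}
    (hx : ∀ i, 0 < x i) : 0 < 1 + (1 - γ) * ∑ i, p i * boxCox γ (x i) := by
  rw [one_add_mul_sum_boxCox hp1]
  exact sum_mul_pos_of_sum_eq_one hp hp1 fun i => rpow_pos_of_pos (hx i) _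

lemma certEquiv_pos (hp : ∀ i, 0 ≤ p i) (hp1 : ∑ i, p i = 1) {x : ι → ℝ}
    (hx : ∀ i, 0 < x i) : 0 < certEquiv γ p x :=
  boxCoxInv_pos (one_add_mul_sum_boxCox_pos hp hp1 hx)

lemma certEquiv_le_certEquiv_of_sum_le (hp : ∀ i, 0 ≤ p i) (hp1 : ∑ i, p i = 1)
    {x y : ι → ℝ} (hx : ∀ i, 0 < x i) (hy : ∀ i, 0 < y i)
    (h : ∑ i, p i * boxCox γ (x i) ≤ ∑ i, p i * boxCox γ (y i)) :
    certEquiv γ p x ≤ certEquiv γ p y :=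
  boxCoxInv_le_boxCoxInv (one_add_mul_sum_boxCox_pos hp hp1 hx)
    (one_add_mul_sum_boxCox_pos hp hp1 hy) h

lemma certEquiv_mono (hp : ∀ i, 0 ≤ p i) (hp1 : ∑ i, p i = 1) {x y : ι → ℝ}
    (hx : ∀ i, 0 < x i) (hxy : ∀ i, x i ≤ y i) : certEquiv γ p x ≤ certEquiv γ p y :=
  certEquiv_le_certEquiv_of_sum_le hp hp1 hx (fun i => (hx i).trans_le (hxy i)) <|
    Finset.sum_le_sum fun i _ =>
      mul_le_mul_of_nonneg_left (boxCox_le_boxCox γ (hx i) (hxy i)) (hp i)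

lemma certEquiv_const_mul (hp : ∀ i, 0 ≤ p i) (hp1 : ∑ i, p i = 1) {x : ι → ℝ}
    (hx : ∀ i, 0 < x i) {c : ℝ} (hc : 0 < c) :
    certEquiv γ p (fun i => c * x i) = c * certEquiv γ p x := by
  unfold certEquiv boxCoxInv
  split_ifs with h
  · have hlog : ∀ i, p i * boxCox γ (c * x i) = p i * log c + p i * boxCox γ (x i) := by
      intro i
      simp only [boxCox, if_pos h, log_mul hc.ne' (hx i).ne']
      ring
    rw [Finset.sum_congr rfl fun i _ => hlog i, Finset.sum_add_distrib, ← Finset.sum_mul, hp1,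
      one_mul, exp_add, exp_log hc]
  · have hγ : (1 : ℝ) - γ ≠ 0 := sub_ne_zero.mpr (Ne.symm h)
    have hscale : 1 + (1 - γ) * ∑ i, p i * boxCox γ (c * x i) =
        c ^ (1 - γ) * (1 + (1 - γ) * ∑ i, p i * boxCox γ (x i)) := by
      rw [one_add_mul_sum_boxCox hp1, one_add_mul_sum_boxCox hp1, Finset.mul_sum]
      exact Finset.sum_congr rfl fun i _ => by rw [mul_rpow hc.le (hx i).le]; ring
    rw [hscale, mul_rpow (rpow_nonneg hc.le _) (one_add_mul_sum_boxCox_pos hp hp1 hx).le,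
      one_div, rpow_rpow_inv hc.le hγ]

lemma isGreatest_certEquiv_image {X : Type*} [TopologicalSpace X] {K : Set X}
    (hK : IsCompact K) (hKne : K.Nonempty) (hp : ∀ i, 0 ≤ p i) (hp1 : ∑ i, p i = 1)
    {f : X → ι → ℝ} (hf : ∀ i, ContinuousOn (fun θ => f θ i) K)
    (hfpos : ∀ θ ∈ K, ∀ i, 0 < f θ i) :
    IsGreatest ((fun θ => certEquiv γ p (f θ)) '' K)
      (boxCoxInv γ (sSup ((fun θ => ∑ i, p i * boxCox γ (f θ i)) '' K))) := by
  have hcont : ContinuousOn (fun θ => ∑ i, p i * boxCox γ (f θ i)) K :=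
    continuousOn_finsetSum _ fun i _ => continuousOn_const.mul <|
      (continuousOn_boxCox γ).comp (hf i) fun θ hθ => hfpos θ hθ i
  obtain ⟨θ₀, hθ₀, hmax⟩ := hK.exists_isMaxOn hKne hcont
  rw [(IsGreatest.csSup_eq ⟨mem_image_of_mem _ hθ₀, forall_mem_image.mpr (isMaxOn_iff.mp hmax)⟩ :)]
  exact ⟨mem_image_of_mem _ hθ₀, forall_mem_image.mpr fun θ hθ =>
    certEquiv_le_certEquiv_of_sum_le hp hp1 (hfpos θ hθ) (hfpos θ₀ hθ₀) (isMaxOn_iff.mp hmax θ hθ)⟩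

end CertaintyEquivalent

lemma exp_mul_log_add_mul_log {β c K : ℝ} (hc : 0 < c) (hK : 0 < K) :
    exp ((1 - β) * log c + β * log K) = c ^ (1 - β) * K ^ β := by
  rw [exp_add, rpow_def_of_pos hc, rpow_def_of_pos hK, mul_comm (log c), mul_comm (log K)]

lemma mul_add_mul_one_sub_pos {a b θ : ℝ} (ha : 0 < a) (hb : 0 < b) (hθ : θ ∈ Icc (0 : ℝ) 1) :
    0 < a * θ + b * (1 - θ) := by
  rcases hθ.1.eq_or_lt with rfl | hθ0
  · simpa using hb
  · exact add_pos_of_pos_of_nonneg (mul_pos ha hθ0) (mul_nonneg hb.le (sub_nonneg.2 hθ.2))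

lemma sub_mul_pos_of_lt_div {q s c : ℝ} (hq : 0 < q) (hc : c < s / q) : 0 < s - q * c := by
  rw [lt_div_iff₀ hq] at hc
  linarith

/-- The maximum is attained at the consumption `c = (1 - β) / q * s`. -/
lemma isGreatest_rpow_mul_rpow_sub_mul {β q s : ℝ} (hβ0 : 0 < β) (hβ1 : β < 1) (hq : 0 < q)
    (hs : 0 < s) :
    IsGreatest ((fun c => c ^ (1 - β) * (s - q * c) ^ β) '' Ioo 0 (s / q))
      (((1 - β) / q) ^ (1 - β) * β ^ β * s) := by
  have h1β : 0 < 1 - β := by linarith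
  refine ⟨⟨(1 - β) / q * s, ⟨by positivity, ?_⟩, ?_⟩, ?_⟩
  · rw [div_mul_eq_mul_div, div_lt_div_iff_of_pos_right hq]
    nlinarith
  · dsimp only
    rw [show s - q * ((1 - β) / q * s) = β * s by field_simp; ring,
      mul_rpow (by positivity) hs.le, mul_rpow hβ0.le hs.le,
      show ((1 - β) / q) ^ (1 - β) * s ^ (1 - β) * (β ^ β * s ^ β) =
        ((1 - β) / q) ^ (1 - β) * β ^ β * (s ^ (1 - β) * s ^ β) by ring,
      ← rpow_add hs, sub_add_cancel, rpow_one]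
  · rintro _ ⟨c, ⟨hc, hcs⟩, rfl⟩
    have hw := sub_mul_pos_of_lt_div hq hcs
    -- weighted AM–GM for `q c / (1 - β)` and `(s - q c) / β`, whose weighted mean is `s`
    have amgm := geom_mean_le_arith_mean2_weighted h1β.le hβ0.le
      (div_pos (mul_pos hq hc) h1β).le (div_pos hw hβ0).le (by ring)
    rw [show (1 - β) * (q * c / (1 - β)) + β * ((s - q * c) / β) = s by field_simp; ring] at amgm
    calc c ^ (1 - β) * (s - q * c) ^ β
        = ((1 - β) / q) ^ (1 - β) * β ^ β *
            ((q * c / (1 - β)) ^ (1 - β) * ((s - q * c) / β) ^ β) := by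
          rw [mul_mul_mul_comm, ← mul_rpow (by positivity) (by positivity),
            ← mul_rpow hβ0.le (by positivity)]
          congr 2 <;> field_simp
      _ ≤ ((1 - β) / q) ^ (1 - β) * β ^ β * s := by gcongr

section Bellman

variable {ι : Type*} [Fintype ι]

noncomputable def bellmanObjective (P : ι → ι → ℝ) (β τC γ : ℝ) (Rn : ι → ℝ → ℝ)
    (V : ℝ → ι → ℝ) (s : ℝ) (n : ι) (c θ : ℝ) : ℝ :=
  exp ((1 - β) * log c +
    β * log (certEquiv γ (P n) fun n' => V (Rn n' θ * (s - (1 + τC) * c)) n'))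

def bellmanSet (P : ι → ι → ℝ) (β τC γ : ℝ) (Rn : ι → ℝ → ℝ) (V : ℝ → ι → ℝ) (s : ℝ)
    (n : ι) : Set ℝ :=
  {u | ∃ c ∈ Ioo 0 (s / (1 + τC)), ∃ θ ∈ Icc (0 : ℝ) 1,
    u = bellmanObjective P β τC γ Rn V s n c θ}

noncomputable def bellman (P : ι → ι → ℝ) (β τC γ : ℝ) (Rn : ι → ℝ → ℝ) (V : ℝ → ι → ℝ)
    (s : ℝ) (n : ι) : ℝ :=
  sSup (bellmanSet P β τC γ Rn V s n)

variable {P : ι → ι → ℝ} {β τC γ : ℝ} {Rn : ι → ℝ → ℝ} {V W : ℝ → ι → ℝ} {s : ℝ} {n : ι}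

lemma bellmanSet_nonempty (hq : 0 < 1 + τC) (hs : 0 < s) :
    (bellmanSet P β τC γ Rn V s n).Nonempty := by
  obtain ⟨c, hc⟩ := nonempty_Ioo.mpr (div_pos hs hq)
  exact ⟨_, c, hc, 0, left_mem_Icc.mpr zero_le_one, rfl⟩

lemma bellmanObjective_le_of_le (hq : 0 < 1 + τC) (hβ : 0 ≤ β) (hP : ∀ n', 0 ≤ P n n')
    (hP1 : ∑ n', P n n' = 1) {θ c : ℝ} (hRn : ∀ n', 0 < Rn n' θ)
    (hVW : ∀ x, 0 < x → ∀ n', 0 < V x n' ∧ V x n' ≤ W x n')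
    (hc : c ∈ Ioo 0 (s / (1 + τC))) :
    bellmanObjective P β τC γ Rn V s n c θ ≤ bellmanObjective P β τC γ Rn W s n c θ := by
  have hw := sub_mul_pos_of_lt_div hq hc.2
  have hx : ∀ n', 0 < Rn n' θ * (s - (1 + τC) * c) := fun n' => mul_pos (hRn n') hw
  unfold bellmanObjective
  gcongr
  · exact certEquiv_pos hP hP1 fun n' => (hVW _ (hx n') n').1
  · exact certEquiv_mono hP hP1 (fun n' => (hVW _ (hx n') n').1) fun n' => (hVW _ (hx n') n').2

lemma upperBounds_bellmanSet_subset (hq : 0 < 1 + τC) (hβ : 0 ≤ β) (hP : ∀ n', 0 ≤ P n n')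
    (hP1 : ∑ n', P n n' = 1) (hRn : ∀ n', ∀ θ ∈ Icc (0 : ℝ) 1, 0 < Rn n' θ)
    (hVW : ∀ x, 0 < x → ∀ n', 0 < V x n' ∧ V x n' ≤ W x n') :
    upperBounds (bellmanSet P β τC γ Rn W s n) ⊆ upperBounds (bellmanSet P β τC γ Rn V s n) := by
  rintro v hv _ ⟨c, hc, θ, hθ, rfl⟩
  exact (bellmanObjective_le_of_le hq hβ hP hP1 (fun n' => hRn n' θ hθ) hVW hc).trans
    (hv ⟨c, hc, θ, hθ, rfl⟩)

lemma bellman_le_of_le (hq : 0 < 1 + τC) (hβ : 0 ≤ β) (hP : ∀ n', 0 ≤ P n n')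
    (hP1 : ∑ n', P n n' = 1) (hRn : ∀ n', ∀ θ ∈ Icc (0 : ℝ) 1, 0 < Rn n' θ) (hs : 0 < s)
    (hVW : ∀ x, 0 < x → ∀ n', 0 < V x n' ∧ V x n' ≤ W x n') {v : ℝ}
    (hW : IsGreatest (bellmanSet P β τC γ Rn W s n) v) :
    bellman P β τC γ Rn V s n ≤ v :=
  csSup_le (bellmanSet_nonempty hq hs) (upperBounds_bellmanSet_subset hq hβ hP hP1 hRn hVW hW.2)

lemma le_bellman_of_le (hq : 0 < 1 + τC) (hβ : 0 ≤ β) (hP : ∀ n', 0 ≤ P n n')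
    (hP1 : ∑ n', P n n' = 1) (hRn : ∀ n', ∀ θ ∈ Icc (0 : ℝ) 1, 0 < Rn n' θ) (hs : 0 < s)
    (hVW : ∀ x, 0 < x → ∀ n', 0 < V x n' ∧ V x n' ≤ W x n') {v : ℝ}
    (hV : IsGreatest (bellmanSet P β τC γ Rn V s n) v)
    (hW : BddAbove (bellmanSet P β τC γ Rn W s n)) :
    v ≤ bellman P β τC γ Rn W s n :=
  (le_csSup_iff hW (bellmanSet_nonempty hq hs)).mpr fun _ hb =>
    upperBounds_bellmanSet_subset hq hβ hP hP1 hRn hVW hb hV.1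

lemma bellmanObjective_smul_linear (hq : 0 < 1 + τC) (hP : ∀ n', 0 ≤ P n n')
    (hP1 : ∑ n', P n n' = 1) {a : ι → ℝ} (ha : ∀ n', 0 < a n') {μ : ℝ} (hμ : 0 < μ)
    {c θ : ℝ} (hRn : ∀ n', 0 < Rn n' θ) (hc : c ∈ Ioo 0 (s / (1 + τC))) :
    bellmanObjective P β τC γ Rn (fun x n' => μ * (a n' * x)) s n c θ =
      (μ * certEquiv γ (P n) fun n' => a n' * Rn n' θ) ^ β *
        (c ^ (1 - β) * (s - (1 + τC) * c) ^ β) := by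
  have hw := sub_mul_pos_of_lt_div hq hc.2
  have hK : 0 < certEquiv γ (P n) fun n' => a n' * Rn n' θ :=
    certEquiv_pos hP hP1 fun n' => mul_pos (ha n') (hRn n')
  have hscale : (fun n' => μ * (a n' * (Rn n' θ * (s - (1 + τC) * c)))) =
      fun n' => μ * (s - (1 + τC) * c) * (a n' * Rn n' θ) := funext fun n' => by ring
  rw [bellmanObjective, hscale,
    certEquiv_const_mul hP hP1 (fun n' => mul_pos (ha n') (hRn n')) (mul_pos hμ hw),
    exp_mul_log_add_mul_log hc.1 (by positivity), mul_right_comm μ,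
    mul_rpow (by positivity) hw.le]
  ring

lemma isGreatest_bellmanSet_smul_linear (hq : 0 < 1 + τC) (hβ0 : 0 < β) (hβ1 : β < 1)
    (hP : ∀ n', 0 ≤ P n n') (hP1 : ∑ n', P n n' = 1)
    (hRn : ∀ n', ∀ θ ∈ Icc (0 : ℝ) 1, 0 < Rn n' θ) {a : ι → ℝ} (ha : ∀ n', 0 < a n') {K : ℝ}
    (hK : IsGreatest ((fun θ => certEquiv γ (P n) fun n' => a n' * Rn n' θ) '' Icc 0 1) K)
    (haK : a n = ((1 - β) / (1 + τC)) ^ (1 - β) * (β * K) ^ β) {μ : ℝ} (hμ : 0 < μ)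
    (hs : 0 < s) :
    IsGreatest (bellmanSet P β τC γ Rn (fun x n' => μ * (a n' * x)) s n) (μ ^ β * (a n * s)) := by
  obtain ⟨⟨θ₀, hθ₀, hKθ₀⟩, hKmax⟩ := hK
  obtain ⟨⟨c₀, hc₀, hc₀max⟩, hcmax⟩ := isGreatest_rpow_mul_rpow_sub_mul hβ0 hβ1 hq hs
  simp only at hKθ₀ hc₀max
  have hK0 : 0 < K := hKθ₀ ▸ certEquiv_pos hP hP1 fun n' => mul_pos (ha n') (hRn n' θ₀ hθ₀)
  have hvalue : μ ^ β * (a n * s) =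
      (μ * K) ^ β * (((1 - β) / (1 + τC)) ^ (1 - β) * β ^ β * s) := by
    rw [haK, mul_rpow hβ0.le hK0.le, mul_rpow hμ.le hK0.le]
    ring
  rw [hvalue]
  refine ⟨⟨c₀, hc₀, θ₀, hθ₀, ?_⟩, ?_⟩
  · rw [bellmanObjective_smul_linear hq hP hP1 ha hμ (fun n' => hRn n' θ₀ hθ₀) hc₀, hKθ₀,
      hc₀max]
  · rintro _ ⟨c, hc, θ, hθ, rfl⟩
    rw [bellmanObjective_smul_linear hq hP hP1 ha hμ (fun n' => hRn n' θ hθ) hc]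
    have hKθ := certEquiv_pos (γ := γ) hP hP1 fun n' => mul_pos (ha n') (hRn n' θ hθ)
    have hw := sub_mul_pos_of_lt_div hq hc.2
    exact mul_le_mul
      (rpow_le_rpow (by positivity) (mul_le_mul_of_nonneg_left (hKmax ⟨θ, hθ, rfl⟩) hμ.le) hβ0.le)
      (hcmax ⟨c, hc, rfl⟩) (by have := hc.1; positivity) (by positivity)

def BetweenMultiples (a : ι → ℝ) (μ Λ : ℝ) (V : ℝ → ι → ℝ) : Prop :=
  ∀ s, 0 < s → ∀ n, μ * (a n * s) ≤ V s n ∧ V s n ≤ Λ * (a n * s)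

lemma bellman_betweenMultiples (hq : 0 < 1 + τC) (hβ : 0 ≤ β) (hP : ∀ n n', 0 ≤ P n n')
    (hP1 : ∀ n, ∑ n', P n n' = 1) (hRn : ∀ n', ∀ θ ∈ Icc (0 : ℝ) 1, 0 < Rn n' θ)
    {a : ι → ℝ} (ha : ∀ n, 0 < a n)
    (hlin : ∀ μ, 0 < μ → ∀ s, 0 < s → ∀ n, IsGreatest
      (bellmanSet P β τC γ Rn (fun x n' => μ * (a n' * x)) s n) (μ ^ β * (a n * s)))
    {μ Λ : ℝ} (hμ : 0 < μ) (hΛ : 0 < Λ) (hV : BetweenMultiples a μ Λ V) :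
    BetweenMultiples a (μ ^ β) (Λ ^ β) (bellman P β τC γ Rn V) := by
  intro s hs n
  have hlower : ∀ x, 0 < x → ∀ n', 0 < μ * (a n' * x) ∧ μ * (a n' * x) ≤ V x n' :=
    fun x hx n' => ⟨mul_pos hμ (mul_pos (ha n') hx), (hV x hx n').1⟩
  have hupper : ∀ x, 0 < x → ∀ n', 0 < V x n' ∧ V x n' ≤ Λ * (a n' * x) :=
    fun x hx n' => ⟨(hlower x hx n').1.trans_le (hlower x hx n').2, (hV x hx n').2⟩
  have hbdd : BddAbove (bellmanSet P β τC γ Rn V s n) :=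
    ⟨_, upperBounds_bellmanSet_subset hq hβ (hP n) (hP1 n) hRn hupper (hlin Λ hΛ s hs n).2⟩
  exact ⟨le_bellman_of_le hq hβ (hP n) (hP1 n) hRn hs hlower (hlin μ hμ s hs n) hbdd,
    bellman_le_of_le hq hβ (hP n) (hP1 n) hRn hs hupper (hlin Λ hΛ s hs n)⟩

lemma eq_linear_of_bellman_eq_self (hq : 0 < 1 + τC) (hβ0 : 0 ≤ β) (hβ1 : β < 1)
    (hP : ∀ n n', 0 ≤ P n n') (hP1 : ∀ n, ∑ n', P n n' = 1)
    (hRn : ∀ n', ∀ θ ∈ Icc (0 : ℝ) 1, 0 < Rn n' θ) {a : ι → ℝ} (ha : ∀ n, 0 < a n)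
    (hlin : ∀ μ, 0 < μ → ∀ s, 0 < s → ∀ n, IsGreatest
      (bellmanSet P β τC γ Rn (fun x n' => μ * (a n' * x)) s n) (μ ^ β * (a n * s)))
    {μ Λ : ℝ} (hμ : 0 < μ) (hΛ : 0 < Λ) (hV : BetweenMultiples a μ Λ V)
    (hfix : ∀ s, 0 < s → ∀ n, bellman P β τC γ Rn V s n = V s n) :
    ∀ s, 0 < s → ∀ n, V s n = a n * s := by
  have hiter : ∀ k : ℕ, BetweenMultiples a (μ ^ β ^ k) (Λ ^ β ^ k) V := by
    intro k
    induction k with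
    | zero => simpa using hV
    | succ k ih =>
      intro s hs n
      rw [pow_succ, rpow_mul hμ.le, rpow_mul hΛ.le, ← hfix s hs n]
      exact bellman_betweenMultiples hq hβ0 hP hP1 hRn ha hlin (rpow_pos_of_pos hμ _)
        (rpow_pos_of_pos hΛ _) ih s hs n
  intro s hs n
  have hlim : ∀ t, 0 < t → Tendsto (fun k : ℕ => t ^ β ^ k * (a n * s)) atTop (𝓝 (a n * s)) :=
    fun t ht => by
      simpa using ((continuousAt_const_rpow ht.ne').tendsto.comp
        (tendsto_pow_atTop_nhds_zero_of_lt_one hβ0 hβ1)).mul_const (a n * s)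
  exact le_antisymm (ge_of_tendsto' (hlim Λ hΛ) fun k => (hiter k s hs n).2)
    (le_of_tendsto' (hlim μ hμ) fun k => (hiter k s hs n).1)

lemma exists_betweenMultiples [Nonempty ι] {a : ι → ℝ} (ha : ∀ n, 0 < a n) {lo hi : ℝ}
    (hlo : 0 < lo) (hV : ∀ s, 0 < s → ∀ n, lo * s ≤ V s n ∧ V s n ≤ hi * s) :
    ∃ μ Λ, 0 < μ ∧ 0 < Λ ∧ BetweenMultiples a μ Λ V := by
  obtain ⟨i₀, hmin⟩ := Finite.exists_min a
  obtain ⟨i₁, hmax⟩ := Finite.exists_max a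
  have hhi : 0 < max hi lo := hlo.trans_le (le_max_right _ _)
  refine ⟨lo / a i₁, max hi lo / a i₀, div_pos hlo (ha i₁), div_pos hhi (ha i₀),
    fun s hs n => ⟨?_, ?_⟩⟩
  · calc lo / a i₁ * (a n * s) ≤ lo / a i₁ * (a i₁ * s) :=
          mul_le_mul_of_nonneg_left (mul_le_mul_of_nonneg_right (hmax n) hs.le)
            (div_pos hlo (ha i₁)).le
      _ = lo * s := by field_simp [(ha i₁).ne']
      _ ≤ V s n := (hV s hs n).1
  · calc V s n ≤ hi * s := (hV s hs n).2
      _ ≤ max hi lo * s := by gcongr; exact le_max_left _ _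
      _ = max hi lo / a i₀ * (a i₀ * s) := by field_simp [(ha i₀).ne']
      _ ≤ max hi lo / a i₀ * (a n * s) :=
          mul_le_mul_of_nonneg_left (mul_le_mul_of_nonneg_right (hmin n) hs.le)
            (div_pos hhi (ha i₀)).le

lemma exists_linear_bounds_of_betweenMultiples [Nonempty ι] {a : ι → ℝ} (ha : ∀ n, 0 < a n)
    {μ Λ : ℝ} (hμ : 0 < μ) (hV : BetweenMultiples a μ Λ V) :
    ∃ lo hi, 0 < lo ∧ ∀ s, 0 < s → ∀ n, lo * s ≤ V s n ∧ V s n ≤ hi * s := by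
  obtain ⟨i₀, hmin⟩ := Finite.exists_min a
  obtain ⟨i₁, hmax⟩ := Finite.exists_max a
  have hΛ : 0 ≤ Λ := by
    have h := (hV 1 one_pos i₀).1.trans (hV 1 one_pos i₀).2
    exact (hμ.trans_le (le_of_mul_le_mul_right h (by simpa using ha i₀))).le
  refine ⟨μ * a i₀, Λ * a i₁, mul_pos hμ (ha i₀), fun s hs n => ⟨?_, ?_⟩⟩
  · calc μ * a i₀ * s ≤ μ * (a n * s) := by rw [mul_assoc]; gcongr; exact hmin n
      _ ≤ V s n := (hV s hs n).1
  · calc V s n ≤ Λ * (a n * s) := (hV s hs n).2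
      _ ≤ Λ * a i₁ * s := by rw [mul_assoc]; gcongr; exact hmax n

end Bellman

theorem stmt7_general (N : ℕ) (hN : 1 ≤ N)
    (P : Fin N → Fin N → ℝ) (hP : ∀ n n', 0 ≤ P n n') (hP1 : ∀ n, ∑ n', P n n' = 1)
    (β : ℝ) (hβ : β ∈ Set.Ioo (0:ℝ) 1)
    (τC : ℝ) (hτC : 0 ≤ τC)
    (γ : ℝ)
    (υ : ℝ) (hυ : υ ∈ Set.Ioo (0:ℝ) 1)
    (R : ℝ) (hR : 0 < R)
    (r : Fin N → ℝ) (hr : ∀ n, -1 < r n)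
    (Rn : Fin N → ℝ → ℝ)
    (hRn : ∀ n θ, Rn n θ = (1 / υ) * ((1 + r n) * θ + R * (1 - θ)))
    (InV : (ℝ → Fin N → ℝ) → Prop)
    (hInV : ∀ V, InV V ↔ ∃ lo hi : ℝ, 0 < lo ∧
      ∀ s : ℝ, 0 < s → ∀ n, lo * s ≤ V s n ∧ V s n ≤ hi * s)
    (Tb : (ℝ → Fin N → ℝ) → (ℝ → Fin N → ℝ))
    (hTb : ∀ V s n, Tb V s n = sSup {u : ℝ |
      ∃ c ∈ Set.Ioo 0 (s / (1 + τC)), ∃ θ ∈ Set.Icc (0:ℝ) 1,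
        u = Real.exp ((1 - β) * Real.log c + β * Real.log (boxCoxInv γ
          (∑ n', P n n' * boxCox γ (V (Rn n' θ * (s - (1 + τC) * c)) n'))))})
    (κ : Fin N → (Fin N → ℝ) → ℝ)
    (hκ : ∀ n a, κ n a = boxCoxInv γ
      (sSup ((fun θ => ∑ n', P n n' * boxCox γ (a n' * Rn n' θ)) '' Set.Icc (0:ℝ) 1)))
    (astar : Fin N → ℝ) (hastar_pos : ∀ n, 0 < astar n)
    (hastar_eq : ∀ n, astar n = ((1 - β) / (1 + τC)) ^ (1 - β) * (β * κ n astar) ^ β) :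
    (∀ V, InV V → InV (Tb V)) ∧
    (∀ s : ℝ, 0 < s → ∀ n, Tb (fun s' n' => astar n' * s') s n = astar n * s) ∧
    (∀ V, InV V → (∀ s : ℝ, 0 < s → ∀ n, Tb V s n = V s n) →
      ∀ s : ℝ, 0 < s → ∀ n, V s n = astar n * s) := by
  obtain ⟨hβ0, hβ1⟩ := hβ
  have hq : 0 < 1 + τC := by linarith
  have : Nonempty (Fin N) := ⟨⟨0, hN⟩⟩
  obtain rfl : Tb = bellman P β τC γ Rn := funext fun V => funext fun s => funext (hTb V s)
  have hRpos : ∀ n, ∀ θ ∈ Icc (0 : ℝ) 1, 0 < Rn n θ := fun n θ hθ =>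
    hRn n θ ▸ mul_pos (one_div_pos.mpr hυ.1) (mul_add_mul_one_sub_pos (by linarith [hr n]) hR hθ)
  have hlin : ∀ μ, 0 < μ → ∀ s, 0 < s → ∀ n, IsGreatest
      (bellmanSet P β τC γ Rn (fun x n' => μ * (astar n' * x)) s n) (μ ^ β * (astar n * s)) := by
    intro μ hμ s hs n
    have hκn : IsGreatest ((fun θ => certEquiv γ (P n) fun n' => astar n' * Rn n' θ) '' Icc 0 1)
        (κ n astar) := by
      rw [hκ]
      exact isGreatest_certEquiv_image isCompact_Icc (nonempty_Icc.mpr zero_le_one) (hP n) (hP1 n)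
        (fun n' => by simp only [hRn]; fun_prop)
        fun θ hθ n' => mul_pos (hastar_pos n') (hRpos n' θ hθ)
    exact isGreatest_bellmanSet_smul_linear hq hβ0 hβ1 (hP n) (hP1 n) hRpos hastar_pos hκn
      (hastar_eq n) hμ hs
  have hsandwich : ∀ V, InV V → ∃ μ Λ, 0 < μ ∧ 0 < Λ ∧ BetweenMultiples astar μ Λ V := by
    intro V hV
    obtain ⟨lo, hi, hlo, hbd⟩ := (hInV V).mp hV
    exact exists_betweenMultiples hastar_pos hlo hbd
  refine ⟨fun V hV => ?_, fun s hs n => ?_, fun V hV hfix => ?_⟩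
  · obtain ⟨μ, Λ, hμ, hΛ, hμΛ⟩ := hsandwich V hV
    exact (hInV _).mpr <| exists_linear_bounds_of_betweenMultiples hastar_pos (rpow_pos_of_pos hμ β)
      (bellman_betweenMultiples hq hβ0.le hP hP1 hRpos hastar_pos hlin hμ hΛ hμΛ)
  · simpa only [bellman, one_mul, one_rpow] using (hlin 1 one_pos s hs n).csSup_eq
  · obtain ⟨μ, Λ, hμ, hΛ, hμΛ⟩ := hsandwich V hV
    exact eq_linear_of_bellman_eq_self hq hβ0.le hβ1 hP hP1 hRpos hastar_pos hlin hμ hΛ hμΛ hfix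

/-- Propositions 1 and 6 of the paper: the Bellman operator `T̃` of the
Epstein–Zin wealth-allocation problem maps the class `𝒱` (functions bounded above and
below by positive linear functions of wealth) into itself, the linear value function
`V*_n(s) = a*_n s` is a fixed point, and it is the unique fixed point in `𝒱`. -/
theorem stmt7 (N : ℕ) (hN : 1 ≤ N)
    (P : Fin N → Fin N → ℝ) (hP : ∀ n n', 0 ≤ P n n') (hP1 : ∀ n, ∑ n', P n n' = 1)
    (β : ℝ) (hβ : β ∈ Set.Ioo (0:ℝ) 1)
    (τC : ℝ) (hτC : 0 ≤ τC)
    (γ : ℝ) (hγ : 0 < γ)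
    (υ : ℝ) (hυ : υ ∈ Set.Ioo (0:ℝ) 1)
    (R : ℝ) (hR : 0 < R)
    (r : Fin N → ℝ) (hr : ∀ n, -1 < r n)
    (Rn : Fin N → ℝ → ℝ)
    (hRn : ∀ n θ, Rn n θ = (1 / υ) * ((1 + r n) * θ + R * (1 - θ)))
    (InV : (ℝ → Fin N → ℝ) → Prop)
    (hInV : ∀ V, InV V ↔ ∃ lo hi : ℝ, 0 < lo ∧
      ∀ s : ℝ, 0 < s → ∀ n, lo * s ≤ V s n ∧ V s n ≤ hi * s)
    (Tb : (ℝ → Fin N → ℝ) → (ℝ → Fin N → ℝ))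
    (hTb : ∀ V s n, Tb V s n = sSup {u : ℝ |
      ∃ c ∈ Set.Ioo 0 (s / (1 + τC)), ∃ θ ∈ Set.Icc (0:ℝ) 1,
        u = Real.exp ((1 - β) * Real.log c + β * Real.log (boxCoxInv γ
          (∑ n', P n n' * boxCox γ (V (Rn n' θ * (s - (1 + τC) * c)) n'))))})
    (κ : Fin N → (Fin N → ℝ) → ℝ)
    (hκ : ∀ n a, κ n a = boxCoxInv γ
      (sSup ((fun θ => ∑ n', P n n' * boxCox γ (a n' * Rn n' θ)) '' Set.Icc (0:ℝ) 1)))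
    (astar : Fin N → ℝ) (hastar_pos : ∀ n, 0 < astar n)
    (hastar_eq : ∀ n, astar n = ((1 - β) / (1 + τC)) ^ (1 - β) * (β * κ n astar) ^ β)
    (hastar_unique : ∀ a : Fin N → ℝ, (∀ n, 0 < a n) →
      (∀ n, a n = ((1 - β) / (1 + τC)) ^ (1 - β) * (β * κ n a) ^ β) → a = astar) :
    (∀ V, InV V → InV (Tb V)) ∧
    (∀ s : ℝ, 0 < s → ∀ n, Tb (fun s' n' => astar n' * s') s n = astar n * s) ∧
    (∀ V, InV V → (∀ s : ℝ, 0 < s → ∀ n, Tb V s n = V s n) →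
      ∀ s : ℝ, 0 < s → ∀ n, V s n = astar n * s) :=
  stmt7_general N hN P hP hP1 β hβ τC hτC γ υ hυ R hR r hr Rn hRn InV hInV Tb hTb κ hκ astar
    hastar_pos hastar_eq
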